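/- Let (G,M,I) be a finite context with ∅'' = ∅, let z ∈ G and H = G ∖ {z}, let π□ be the finest extent partition of (G,M,I), let z^□□ be the class of π□ containing z, and assume z^□□ ≠ {z}. Let T be a classification tree in the box extent lattice B(H, M, I ∩ (H×M)) of the subcontext, and set T⁽¹⁾ = {E ∈ T : E is a box extent of (G,M,I)} and T⁽²⁾ = {E ∈ T : E ∪ {z} is a box extent of (G,M,I)}. Then T* = T⁽¹⁾ ∪ {E ∪ {z} : E ∈ T⁽²⁾} is a classification tree in the box extent lattice B(G,M,I). -/
import Mathlib


open Set

variable {G M : Type*}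

/-- The attribute-derivation `A'` of a set of objects (the restricted relation of a
subcontext agrees with `I` on its object set, so no restriction is needed here). -/
def polarUp (I : G → M → Prop) (A : Set G) : Set M := {m | ∀ g ∈ A, I g m}

/-- The object-derivation `B'` of a set of attributes, computed in the subcontext whose
object set is `H` (relation `I ∩ H×M`). -/
def polarDown (I : G → M → Prop) (H : Set G) (B : Set M) : Set G :=
  {g | g ∈ H ∧ ∀ m ∈ B, I g m}

/-- The closure `A''` computed in the subcontext with object set `H`.
Taking `H = Set.univ` gives the closure in the full context `(G,M,I)`. -/
def cl2 (I : G → M → Prop) (H A : Set G) : Set G := polarDown I H (polarUp I A)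

/-- `A` is an extent of the subcontext with object set `H`. -/
def IsExtent (I : G → M → Prop) (H A : Set G) : Prop := A ⊆ H ∧ cl2 I H A = A

/-- An extent partition of the subcontext with object set `H`: a partition of `H`
all of whose classes are extents. -/
def IsExtentPartition (I : G → M → Prop) (H : Set G) (π : Set (Set G)) : Prop :=
  (∀ A ∈ π, A.Nonempty) ∧ π.Pairwise Disjoint ∧ ⋃₀ π = H ∧ ∀ A ∈ π, IsExtent I H A

/-- `E` is a box extent of the subcontext with object set `H`: a class of some extent
partition, or `∅''`. -/
def IsBoxExtent (I : G → M → Prop) (H E : Set G) : Prop :=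
  (∃ π : Set (Set G), IsExtentPartition I H π ∧ E ∈ π) ∨ E = cl2 I H ∅

/-- The finest extent partition: every class of every extent partition is a union of
its classes. -/
def IsFinestExtentPartition (I : G → M → Prop) (H : Set G) (π : Set (Set G)) : Prop :=
  IsExtentPartition I H π ∧
    ∀ σ : Set (Set G), IsExtentPartition I H σ → ∀ A ∈ σ, ∃ S ⊆ π, A = ⋃₀ S

/-- A classification tree in the box extent lattice of the subcontext with object set
`H`: a set of nonempty box extents such that for every nonempty box extent `X`,
`{E ∈ T | X ⊆ E}` is a nonempty chain under inclusion. -/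
def IsBoxClassTree (I : G → M → Prop) (H : Set G) (T : Set (Set G)) : Prop :=
  (∀ E ∈ T, E.Nonempty ∧ IsBoxExtent I H E) ∧
  ∀ X : Set G, X.Nonempty → IsBoxExtent I H X →
    ({E ∈ T | X ⊆ E}.Nonempty ∧ IsChain (· ⊆ ·) {E ∈ T | X ⊆ E})

/-- A maximal classification tree in the box extent lattice. -/
def IsMaxBoxClassTree (I : G → M → Prop) (H : Set G) (T : Set (Set G)) : Prop :=
  IsBoxClassTree I H T ∧ ∀ T' : Set (Set G), IsBoxClassTree I H T' → T ⊆ T' → T' = T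

/-- Given a classification tree `T` of the subcontext `(G ∖ {z}, M, I ∩ (G∖{z})×M)`,
`treeStar I z T = T⁽¹⁾ ∪ {E ∪ {z} | E ∈ T⁽²⁾}`, where `T⁽¹⁾` consists of the members of
`T` that are box extents of `(G,M,I)` and `T⁽²⁾` of those `E ∈ T` with `E ∪ {z}` a box
extent of `(G,M,I)`. -/
def treeStar (I : G → M → Prop) (z : G) (T : Set (Set G)) : Set (Set G) :=
  {E ∈ T | IsBoxExtent I Set.univ E} ∪
    (fun E => E ∪ {z}) '' {E ∈ T | IsBoxExtent I Set.univ (E ∪ {z})}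

section Aux

variable {G M : Type*}

lemma polarUp_antitone (I : G → M → Prop) {A B : Set G} (h : A ⊆ B) :
    polarUp I B ⊆ polarUp I A := fun m hm g hg => hm g (h hg)

lemma cl2_subset_base (I : G → M → Prop) (H A : Set G) : cl2 I H A ⊆ H :=
  fun _ hg => hg.1

lemma cl2_extensive (I : G → M → Prop) {H A : Set G} (hA : A ⊆ H) : A ⊆ cl2 I H A :=
  fun g hg => ⟨hA hg, fun _ hm => hm g hg⟩

lemma cl2_eq_inter (I : G → M → Prop) (H A : Set G) :
    cl2 I H A = cl2 I Set.univ A ∩ H := by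
  ext g
  simp only [cl2, polarDown, Set.mem_setOf_eq, Set.mem_inter_iff, Set.mem_univ, true_and]
  tauto

lemma cl2_mono (I : G → M → Prop) (H : Set G) {A B : Set G} (h : A ⊆ B) :
    cl2 I H A ⊆ cl2 I H B :=
  fun g hg => ⟨hg.1, fun m hm => hg.2 m (polarUp_antitone I h hm)⟩

lemma isExtent_diff (I : G → M → Prop) (z : G) {A : Set G}
    (hA : IsExtent I Set.univ A) : IsExtent I (Set.univ \ {z}) (A \ {z}) := by
  constructor
  · intro g hg; exact ⟨Set.mem_univ g, hg.2⟩
  · refine subset_antisymm ?_ (cl2_extensive I (fun g hg => ⟨Set.mem_univ g, hg.2⟩))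
    intro g hg
    rw [cl2_eq_inter] at hg
    obtain ⟨h1, h2⟩ := hg
    have h3 : g ∈ cl2 I Set.univ A := cl2_mono I _ Set.diff_subset h1
    rw [hA.2] at h3
    exact ⟨h3, h2.2⟩

lemma induced_partition (I : G → M → Prop) (z : G) {σ : Set (Set G)}
    (hσ : IsExtentPartition I Set.univ σ) :
    IsExtentPartition I (Set.univ \ {z})
      {B | ∃ A ∈ σ, B = A \ {z} ∧ B.Nonempty} := by
  obtain ⟨hne, hdisj, hcov, hext⟩ := hσ
  refine ⟨?_, ?_, ?_, ?_⟩
  · rintro B ⟨A, hA, rfl, hBne⟩; exact hBne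
  · rintro B₁ ⟨A₁, hA₁, rfl, h₁⟩ B₂ ⟨A₂, hA₂, rfl, h₂⟩ hne12
    have hA : A₁ ≠ A₂ := by rintro rfl; exact hne12 rfl
    exact Set.disjoint_of_subset Set.diff_subset Set.diff_subset (hdisj hA₁ hA₂ hA)
  · ext g
    constructor
    · rintro ⟨B, ⟨A, hA, rfl, h⟩, hm⟩
      exact ⟨Set.mem_univ g, hm.2⟩
    · intro hg
      have hg' : g ∈ ⋃₀ σ := by rw [hcov]; trivial
      obtain ⟨A, hA, hgA⟩ := hg'
      exact ⟨A \ {z}, ⟨A, hA, rfl, ⟨g, hgA, hg.2⟩⟩, hgA, hg.2⟩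
  · rintro B ⟨A, hA, rfl, h⟩; exact isExtent_diff I z (hext A hA)

lemma boxExtent_subset (I : G → M → Prop) (H E : Set G) (h : IsBoxExtent I H E) :
    E ⊆ H := by
  rcases h with ⟨ρ, ⟨_, _, hcov, _⟩, hE⟩ | rfl
  · intro g hg; rw [← hcov]; exact ⟨E, hE, hg⟩
  · exact cl2_subset_base I H _

lemma boxExtent_self (I : G → M → Prop) (H : Set G) (hH : H.Nonempty) :
    IsBoxExtent I H H := by
  left
  refine ⟨{H}, ⟨?_, ?_, ?_, ?_⟩, rfl⟩
  · intro A hA; rw [Set.mem_singleton_iff] at hA; subst hA; exact hH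
  · exact Set.pairwise_singleton _ _
  · exact Set.sUnion_singleton _
  · intro A hA; rw [Set.mem_singleton_iff] at hA; subst hA
    exact ⟨subset_rfl, subset_antisymm (cl2_subset_base I _ _) (cl2_extensive I subset_rfl)⟩

end Aux

/-- If `Z = z^□□ ≠ {z}` and `T` is a classification tree in the box extent lattice of the
subcontext `(G ∖ {z}, M, I ∩ (G∖{z})×M)`, then `T* = T⁽¹⁾ ∪ {E ∪ {z} | E ∈ T⁽²⁾}` is a
classification tree in the box extent lattice `B(G,M,I)`. -/
theorem treeStar_isBoxClassTree
    [Fintype G] [Fintype M] (I : G → M → Prop)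
    (hempty : cl2 I Set.univ (∅ : Set G) = ∅)
    (z : G) (π : Set (Set G)) (hπ : IsFinestExtentPartition I Set.univ π)
    (Z : Set G) (hZ : Z ∈ π) (hzZ : z ∈ Z) (hZne : Z ≠ {z})
    (T : Set (Set G)) (hT : IsBoxClassTree I (Set.univ \ {z}) T) :
    IsBoxClassTree I Set.univ (treeStar I z T) := by
  classical
  -- basic facts
  have hπdisj := hπ.1.2.1
  have hmem_part : ∀ X : Set G, X.Nonempty → IsBoxExtent I Set.univ X →
      ∃ σ, IsExtentPartition I Set.univ σ ∧ X ∈ σ := by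
    intro X hXne hX
    rcases hX with ⟨σ, hσ, hXσ⟩ | h
    · exact ⟨σ, hσ, hXσ⟩
    · rw [hempty] at h
      exact absurd hXne (by simp [h])
  have hunion : ∀ X : Set G, X.Nonempty → IsBoxExtent I Set.univ X →
      ∃ S ⊆ π, X = ⋃₀ S := by
    intro X hXne hX
    obtain ⟨σ, hσ, hXσ⟩ := hmem_part X hXne hX
    exact hπ.2 σ hσ X hXσ
  have hZsub : ∀ X : Set G, X.Nonempty → IsBoxExtent I Set.univ X → z ∈ X → Z ⊆ X := by
    intro X hXne hX hzX
    obtain ⟨S, hSπ, rfl⟩ := hunion X hXne hX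
    obtain ⟨P, hPS, hzP⟩ := hzX
    have hPZ : P = Z := by
      by_contra hne
      exact Set.disjoint_left.mp (hπdisj (hSπ hPS) hZ hne) hzP hzZ
    exact fun w hw => ⟨P, hPS, hPZ ▸ hw⟩
  have hZnot : ∀ X : Set G, X.Nonempty → IsBoxExtent I Set.univ X → z ∉ X →
      ∀ w ∈ Z, w ∉ X := by
    intro X hXne hX hzX w hwZ hwX
    obtain ⟨S, hSπ, rfl⟩ := hunion X hXne hX
    obtain ⟨P, hPS, hwP⟩ := hwX
    have hPZ : P ≠ Z := by rintro rfl; exact hzX ⟨P, hPS, hzZ⟩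
    exact Set.disjoint_left.mp (hπdisj (hSπ hPS) hZ hPZ) hwP hwZ
  obtain ⟨y, hyZ, hyz⟩ : ∃ w ∈ Z, w ≠ z := by
    by_contra h
    push_neg at h
    exact hZne (Set.eq_singleton_iff_unique_mem.mpr ⟨hzZ, h⟩)
  have hsub_box : ∀ X : Set G, X.Nonempty → IsBoxExtent I Set.univ X →
      (X \ {z}).Nonempty → IsBoxExtent I (Set.univ \ {z}) (X \ {z}) := by
    intro X hXne hX hne
    obtain ⟨σ, hσ, hXσ⟩ := hmem_part X hXne hX
    exact Or.inl ⟨_, induced_partition I z hσ, ⟨X, hXσ, rfl, hne⟩⟩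
  -- univ is in treeStar
  have hHne : (Set.univ \ {z}).Nonempty := ⟨y, Set.mem_univ y, hyz⟩
  have hHbox := boxExtent_self I (Set.univ \ {z}) hHne
  have hT_subH : ∀ E ∈ T, E ⊆ Set.univ \ {z} := fun E hE =>
    boxExtent_subset I _ _ (hT.1 E hE).2
  have hHT : Set.univ \ {z} ∈ T := by
    obtain ⟨⟨E₀, hE₀T, hHE₀⟩, -⟩ := hT.2 _ hHne hHbox
    have : E₀ = Set.univ \ {z} := subset_antisymm (hT_subH E₀ hE₀T) hHE₀
    rwa [← this]
  have hdiffu : (Set.univ \ {z}) ∪ {z} = Set.univ :=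
    Set.diff_union_of_subset (by simp)
  have huniv_mem : Set.univ ∈ treeStar I z T := by
    right
    refine ⟨Set.univ \ {z}, ⟨hHT, ?_⟩, hdiffu⟩
    rw [hdiffu]
    exact boxExtent_self I Set.univ ⟨z, Set.mem_univ z⟩
  constructor
  · rintro F (⟨hFT, hFbox⟩ | ⟨E, ⟨hET, hEbox⟩, rfl⟩)
    · exact ⟨(hT.1 F hFT).1, hFbox⟩
    · exact ⟨⟨z, Set.mem_union_right _ rfl⟩, hEbox⟩
  · intro X hXne hXbox
    refine ⟨⟨Set.univ, huniv_mem, Set.subset_univ X⟩, ?_⟩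
    by_cases hzX : z ∈ X
    · -- every element of the star tree above X has the form E ∪ {z}
      have hZX : Z ⊆ X := hZsub X hXne hXbox hzX
      have hX'ne : (X \ {z}).Nonempty := ⟨y, hZX hyZ, hyz⟩
      have hX'box := hsub_box X hXne hXbox hX'ne
      have hchain := (hT.2 _ hX'ne hX'box).2
      have key : ∀ F ∈ treeStar I z T, X ⊆ F →
          ∃ E, E ∈ T ∧ F = E ∪ {z} ∧ X \ {z} ⊆ E := by
        rintro F (⟨hFT, -⟩ | ⟨E, ⟨hET, -⟩, rfl⟩) hXF
        · exact absurd rfl (hT_subH F hFT (hXF hzX)).2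
        · refine ⟨E, hET, rfl, fun g hg => ?_⟩
          rcases hXF hg.1 with h | h
          · exact h
          · exact absurd h hg.2
      rintro F₁ ⟨h1mem, h1sub⟩ F₂ ⟨h2mem, h2sub⟩ hne12
      obtain ⟨E₁, hE₁T, rfl, h1⟩ := key F₁ h1mem h1sub
      obtain ⟨E₂, hE₂T, rfl, h2⟩ := key F₂ h2mem h2sub
      have hEne : E₁ ≠ E₂ := by rintro rfl; exact hne12 rfl
      rcases hchain ⟨hE₁T, h1⟩ ⟨hE₂T, h2⟩ hEne with h | h
      · exact Or.inl (Set.union_subset_union_left _ h)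
      · exact Or.inr (Set.union_subset_union_left _ h)
    · -- z ∉ X
      have hXz : X \ {z} = X := by
        ext g; simp only [Set.mem_diff, Set.mem_singleton_iff, and_iff_left_iff_imp]
        rintro hg rfl; exact hzX hg
      have hX'box : IsBoxExtent I (Set.univ \ {z}) X := by
        have h := hsub_box X hXne hXbox (by rw [hXz]; exact hXne)
        rwa [hXz] at h
      have hchain := (hT.2 X hXne hX'box).2
      -- mixed comparability helper
      have asym : ∀ E₁ E₂ : Set G, E₁ ∈ T → E₂ ∈ T → X ⊆ E₁ → X ⊆ E₂ →
          IsBoxExtent I Set.univ E₁ → IsBoxExtent I Set.univ (E₂ ∪ {z}) →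
          E₁ ⊆ E₂ ∪ {z} := by
        intro E₁ E₂ hE₁T hE₂T hX1 hX2 hbox1 hbox2
        rcases eq_or_ne E₁ E₂ with rfl | hEne
        · exact Set.subset_union_left
        rcases hchain ⟨hE₁T, hX1⟩ ⟨hE₂T, hX2⟩ hEne with h | h
        · exact h.trans Set.subset_union_left
        · exfalso
          have hb2ne : (E₂ ∪ {z}).Nonempty := ⟨z, Set.mem_union_right _ rfl⟩
          have hZ2 : Z ⊆ E₂ ∪ {z} :=
            hZsub _ hb2ne hbox2 (Set.mem_union_right _ rfl)
          have hyE₂ : y ∈ E₂ := by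
            rcases hZ2 hyZ with h' | h'
            · exact h'
            · exact absurd h' hyz
          have hzE₁ : z ∉ E₁ := fun hz => (hT_subH E₁ hE₁T hz).2 rfl
          exact hZnot E₁ (hT.1 E₁ hE₁T).1 hbox1 hzE₁ y hyZ (h hyE₂)
      rintro F₁ ⟨h1mem, h1sub⟩ F₂ ⟨h2mem, h2sub⟩ hne12
      have hXsub : ∀ E : Set G, X ⊆ E ∪ {z} → X ⊆ E := by
        intro E hE g hg
        rcases hE hg with h | h
        · exact h
        · exact absurd h (by rintro rfl; rw [Set.mem_singleton_iff] at h; exact hzX (h ▸ hg))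
      rcases h1mem with ⟨hF₁T, hF₁box⟩ | ⟨E₁, ⟨hE₁T, hE₁box⟩, rfl⟩
      · rcases h2mem with ⟨hF₂T, hF₂box⟩ | ⟨E₂, ⟨hE₂T, hE₂box⟩, rfl⟩
        · exact hchain ⟨hF₁T, h1sub⟩ ⟨hF₂T, h2sub⟩ hne12
        · exact Or.inl (asym F₁ E₂ hF₁T hE₂T h1sub (hXsub E₂ h2sub) hF₁box hE₂box)
      · rcases h2mem with ⟨hF₂T, hF₂box⟩ | ⟨E₂, ⟨hE₂T, hE₂box⟩, rfl⟩
        · exact Or.inr (asym F₂ E₁ hF₂T hE₁T h2sub (hXsub E₁ h1sub) hF₂box hE₁box)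
        · have hEne : E₁ ≠ E₂ := by rintro rfl; exact hne12 rfl
          rcases hchain ⟨hE₁T, hXsub E₁ h1sub⟩ ⟨hE₂T, hXsub E₂ h2sub⟩ hEne with h | h
          · exact Or.inl (Set.union_subset_union_left _ h)
          · exact Or.inr (Set.union_subset_union_left _ h)
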